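/- arXiv:1111.6710 — 8 statements merged into one kernel-verified Lean document; each statement's English description precedes it below -/
import Mathlib

section
/- Let k be a finite field with q elements and k̄ an algebraic closure of k. Let M be a finitely generated free abelian group and σ an automorphism of M. Then the set of group homomorphisms f : M → k̄ˣ satisfying f(σm) = f(m)^q for all m ∈ M is finite. (Equivalently, H^0(𝔴, Hom(M, k̄ˣ)) is finite, where the Weil group 𝔴 ≅ ℤ of k acts on Hom(M, k̄ˣ) through σ on M and Frobenius x ↦ x^q on k̄ˣ.) -/
/-!
Let `P` be the characteristic polynomial of `σ` over `ℤ`. If `f ∘ σ = q • f`, then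
`f ∘ Q(σ) = Q(q) • f` for every `Q : ℤ[X]`, so Cayley–Hamilton gives `P(q) • f = 0`. Since `σ` is
invertible, `P(0) = ±1`, and `q ∣ P(q) - P(0)` with `q ≥ 2` forces `P(q) ≠ 0`. Hence every such `f`
takes values in the finitely many `|P(q)|`-th roots of unity of `k̄`, and `f` is determined by its
values on a finite generating set of `M`.
-/

open Polynomial

namespace LinearMap

theorem map_aeval_apply_of_map_apply_eq_smul {R M A : Type*} [CommSemiring R] [AddCommMonoid M]
    [Module R M] [AddCommMonoid A] [Module R A] {φ : Module.End R M} {f : M →ₗ[R] A} {r : R}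
    (hf : ∀ m, f (φ m) = r • f m) (p : R[X]) (m : M) :
    f (aeval φ p m) = p.eval r • f m := by
  induction p using Polynomial.induction_on generalizing m with
  | C a => simp
  | add p p' hp hp' => simp [hp, hp', add_smul]
  | monomial n a ih =>
    rw [pow_succ, ← mul_assoc, map_mul, aeval_X, Module.End.mul_apply, ih, hf, smul_smul,
      eval_mul_X]

theorem charpoly_eval_smul_eq_zero {R M A : Type*} [CommRing R] [AddCommGroup M] [Module R M]
    [Module.Free R M] [Module.Finite R M] [AddCommGroup A] [Module R A] {φ : Module.End R M}
    {f : M →ₗ[R] A} {r : R} (hf : ∀ m, f (φ m) = r • f m) (m : M) :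
    φ.charpoly.eval r • f m = 0 := by
  rw [← map_aeval_apply_of_map_apply_eq_smul hf, aeval_self_charpoly, zero_apply, map_zero]

end LinearMap

theorem LinearEquiv.isUnit_charpoly_coeff_zero {R M : Type*} [CommRing R] [AddCommGroup M]
    [Module R M] [Module.Free R M] [Module.Finite R M] (e : M ≃ₗ[R] M) :
    IsUnit ((e : Module.End R M).charpoly.coeff 0) := by
  have hdet := e.isUnit_det'
  rw [LinearMap.det_eq_sign_charpoly_coeff] at hdet
  exact isUnit_of_mul_isUnit_right hdet

theorem LinearEquiv.charpoly_eval_ne_zero {R M : Type*} [CommRing R] [AddCommGroup M]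
    [Module R M] [Module.Free R M] [Module.Finite R M] (e : M ≃ₗ[R] M) {r : R}
    (hr : ¬IsUnit r) : (e : Module.End R M).charpoly.eval r ≠ 0 := by
  intro h
  have hdvd := sub_dvd_eval_sub r 0 (e : Module.End R M).charpoly
  rw [h, sub_zero, zero_sub, dvd_neg, ← coeff_zero_eq_eval_zero] at hdvd
  exact hr (isUnit_of_dvd_unit hdvd e.isUnit_charpoly_coeff_zero)

theorem Units.finite_setOf_zpow_eq_one {R : Type*} [CommRing R] [IsDomain R] {n : ℤ}
    (hn : n ≠ 0) : {u : Rˣ | u ^ n = 1}.Finite := by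
  have : NeZero n.natAbs := ⟨Int.natAbs_ne_zero.mpr hn⟩
  have hfin : (rootsOfUnity n.natAbs R : Set Rˣ).Finite :=
    Set.finite_coe_iff.mp (inferInstanceAs (Finite (rootsOfUnity n.natAbs R)))
  exact hfin.subset fun u hu => (mem_rootsOfUnity _ u).mpr (pow_natAbs_eq_one.mpr hu)

theorem AddMonoidHom.finite_setOf_forall_mem {M A : Type*} [AddGroup M] [AddGroup.FG M]
    [AddMonoid A] {S : Set A} (hS : S.Finite) : {f : M →+ A | ∀ m, f m ∈ S}.Finite := by
  obtain ⟨s, hs⟩ := ‹AddGroup.FG M›.out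
  have hinj : Set.InjOn (fun (f : M →+ A) (i : s) => f i) {f | ∀ m, f m ∈ S} :=
    fun f _ g _ hfg => AddMonoidHom.eq_of_eqOn_dense hs fun i hi => congrFun hfg ⟨i, hi⟩
  refine Set.Finite.of_finite_image ((Set.Finite.pi' fun _ => hS).subset ?_) hinj
  rintro _ ⟨f, hf, rfl⟩ i
  exact hf i

/-- Let `k` be a finite field with `q` elements and `k̄` an algebraic closure of `k`.
If `M` is a finitely generated free abelian group with an automorphism `σ`, then the set
of group homomorphisms `f : M → k̄ˣ` with `f (σ m) = f m ^ q` for all `m` is finite;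
i.e. `H⁰(𝔴, Hom(M, k̄ˣ))` is finite. -/
theorem finite_weilFixed_hom_to_units (k : Type*) [Field k] [Fintype k]
    (q : ℕ) (hq : Fintype.card k = q)
    (M : Type*) [AddCommGroup M] [Module.Free ℤ M] [Module.Finite ℤ M]
    (σ : M ≃+ M) :
    {f : M →+ Additive (AlgebraicClosure k)ˣ |
      ∀ m : M, f (σ m) = q • f m}.Finite := by
  have hq_not_unit : ¬IsUnit (q : ℤ) := by
    have := Fintype.one_lt_card (α := k)
    rw [Int.isUnit_iff]
    omega
  have hP := σ.toIntLinearEquiv.charpoly_eval_ne_zero hq_not_unit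
  have : AddGroup.FG M := Module.Finite.iff_addGroup_fg.mp inferInstance
  refine (AddMonoidHom.finite_setOf_forall_mem ((Units.finite_setOf_zpow_eq_one hP).preimage
    Additive.toMul.injective.injOn)).subset fun f hf m => ?_
  exact LinearMap.charpoly_eval_smul_eq_zero (f := f.toIntLinearMap)
    (fun m => by simpa [natCast_zsmul] using hf m) m
end

section
/- Let k be a finite field with q elements and k̄ an algebraic closure of k. Let M be a finitely generated free abelian group and σ an automorphism of M. Then the set of additive group homomorphisms f : M → (k̄, +) satisfying f(σm) = f(m)^q for all m ∈ M is finite. (Equivalently, H^0(𝔴, Hom(M, k̄)) is finite, where the Weil group 𝔴 ≅ ℤ of k acts on Hom(M, k̄) through σ on M and Frobenius x ↦ x^q on k̄.) -/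
/-!
The image of an equivariant `f : M →+ k̄` is a finitely generated subgroup of a field of
characteristic `p`, so it has at most `p ^ rank M` elements, and it is stable under the injective
map `x ↦ x ^ q`. That map therefore permutes the image, whence `x ^ q ^ (p ^ rank M)! = x` for
every value `x` of `f`. The values of `f` on a basis thus lie in the finite root set of a single
polynomial `X ^ Q - X`, and they determine `f`.
-/

open Function Set
open scoped Nat

theorem Function.isPeriodicPt_factorial_card_of_mapsTo {α : Type*} {g : α → α} {s : Set α}
    [Finite s] (hg : Injective g) (hs : MapsTo g s s) {x : α} (hx : x ∈ s) :
    IsPeriodicPt g (Nat.card s)! x := by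
  have hbij : Bijective (hs.restrict g s s) :=
    Finite.injective_iff_bijective.mp (hs.restrict_inj.mpr hg.injOn)
  have hperm : Equiv.ofBijective _ hbij ^ (Nat.card s)! = 1 := by
    rw [← Nat.card_perm]
    exact pow_card_eq_one'
  have := congrArg (fun π : Equiv.Perm s => (π ⟨x, hx⟩ : α)) hperm
  simpa [IsPeriodicPt, IsFixedPt, Equiv.Perm.coe_pow, hs.iterate_restrict] using this

theorem AddMonoidHom.range_subset_range_sum_smul_basis (p : ℕ) {ι M A : Type*} [Fintype ι]
    [AddCommGroup M] [AddCommGroup A] [Module (ZMod p) A] (b : Module.Basis ι ℤ M)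
    (f : M →+ A) :
    (f.range : Set A) ⊆ Set.range fun c : ι → ZMod p => ∑ i, c i • f (b i) := by
  rintro _ ⟨x, rfl⟩
  refine ⟨fun i => b.repr x i, ?_⟩
  simp only [Int.cast_smul_eq_zsmul, ← map_zsmul, ← map_sum, b.sum_repr]

theorem AddMonoidHom.apply_pow_pow_factorial_eq_self {K : Type*} [Field K] {p : ℕ}
    [Fact p.Prime] [CharP K p] (m : ℕ) {ι M : Type*} [Fintype ι] [AddCommGroup M]
    (b : Module.Basis ι ℤ M) (σ : M → M) (f : M →+ K) (hf : ∀ x, f (σ x) = f x ^ p ^ m)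
    (x : M) : f x ^ (p ^ m) ^ (p ^ Fintype.card ι)! = f x := by
  let := ZMod.algebra K p
  have hsub := f.range_subset_range_sum_smul_basis p b
  have : Finite (f.range : Set K) := (Set.finite_range _).subset hsub
  have hcard : Nat.card (f.range : Set K) ≤ p ^ Fintype.card ι :=
    calc Nat.card (f.range : Set K)
        ≤ Nat.card (Set.range fun c : ι → ZMod p => ∑ i, c i • f (b i)) :=
          Nat.card_mono (Set.finite_range _) hsub
      _ ≤ Nat.card (ι → ZMod p) := Finite.card_range_le _
      _ = p ^ Fintype.card ι := by rw [Nat.card_fun, Nat.card_zmod, Nat.card_eq_fintype_card]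
  have hmaps : MapsTo (fun y : K => y ^ p ^ m) f.range f.range := by
    rintro _ ⟨y, rfl⟩
    exact ⟨σ y, hf y⟩
  have hper := (isPeriodicPt_factorial_card_of_mapsTo (g := fun y : K => y ^ p ^ m)
    (iterateFrobenius K p m).injective hmaps ⟨x, rfl⟩).trans_dvd
    (Nat.factorial_dvd_factorial hcard)
  simpa [IsPeriodicPt, IsFixedPt, pow_iterate] using hper

theorem finite_setOf_pow_eq_self (K : Type*) [Field K] {n : ℕ} (hn : 1 < n) :
    {y : K | y ^ n = y}.Finite :=
  (Polynomial.finite_setOfPred_isRoot (FiniteField.X_pow_card_sub_X_ne_zero K hn)).subset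
    fun y hy => by simp_all [Polynomial.IsRoot]

theorem finite_setOf_addMonoidHom_map_apply_eq_pow {K : Type*} [Field K] {p : ℕ}
    [Fact p.Prime] [CharP K p] {m : ℕ} (hm : m ≠ 0) (M : Type*) [AddCommGroup M]
    [Module.Free ℤ M] [Module.Finite ℤ M] (σ : M → M) :
    {f : M →+ K | ∀ x, f (σ x) = f x ^ p ^ m}.Finite := by
  let b := Module.Free.chooseBasis ℤ M
  have hq : 1 < p ^ m := Nat.one_lt_pow hm (Fact.out : p.Prime).one_lt
  have hfix := finite_setOf_pow_eq_self K <| Nat.one_lt_pow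
    (Nat.factorial_ne_zero (p ^ Fintype.card (Module.Free.ChooseBasisIndex ℤ M))) hq
  have hinj : Injective fun (f : M →+ K) i => f (b i) := fun f g h =>
    AddMonoidHom.toIntLinearMap_injective (b.ext fun i => congrFun h i)
  refine ((Finite.pi fun _ => hfix).preimage hinj.injOn).subset ?_
  intro f hf i _
  exact f.apply_pow_pow_factorial_eq_self m b σ hf (b i)

/-- Let `k` be a finite field with `q` elements and `k̄` an algebraic closure of `k`.
If `M` is a finitely generated free abelian group with an automorphism `σ`, then the set
of additive group homomorphisms `f : M → (k̄, +)` with `f (σ m) = (f m) ^ q` for all `m`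
is finite; i.e. `H⁰(𝔴, Hom(M, k̄))` is finite. -/
theorem finite_weilFixed_hom_to_additive (k : Type*) [Field k] [Fintype k]
    (q : ℕ) (hq : Fintype.card k = q)
    (M : Type*) [AddCommGroup M] [Module.Free ℤ M] [Module.Finite ℤ M]
    (σ : M ≃+ M) :
    {f : M →+ AlgebraicClosure k | ∀ m : M, f (σ m) = (f m) ^ q}.Finite := by
  obtain ⟨p, _⟩ := CharP.exists k
  obtain ⟨n, hp, hcard⟩ := FiniteField.card k p
  have : Fact p.Prime := ⟨hp⟩
  have : CharP (AlgebraicClosure k) p :=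
    charP_of_injective_algebraMap (algebraMap k _).injective p
  subst hq
  rw [hcard]
  exact finite_setOf_addMonoidHom_map_apply_eq_pow n.ne_zero M σ
end

section
/- Let k be a finite field with q elements and k̄ an algebraic closure of k. Let M be a finitely generated free abelian group and σ an automorphism of M. Then for every group homomorphism h : M → k̄ˣ there exists a group homomorphism f : M → k̄ˣ such that h(m) = f(m)^q · f(σm)⁻¹ for all m ∈ M. (Equivalently, H^1(𝔴, Hom(M, k̄ˣ)) = 0, where the Weil group 𝔴 ≅ ℤ of k acts on Hom(M, k̄ˣ) through σ on M and Frobenius x ↦ x^q on k̄ˣ.) -/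
/-!
The map `T = q • id - σ` on `M` is injective: a kernel element satisfies `σ m = q • m`, so
`m = q • σ⁻¹ m` with `σ⁻¹ m` again in the kernel, hence `m` is divisible by every power of `q`,
which forces `m = 0` in a free abelian group as `q > 1`. Since `k̄ˣ` is divisible, it is an
injective `ℤ`-module, so `h` extends along `T` to some `f`, i.e. `h = f ∘ T`.
-/

theorem IsAlgClosed.zpow_surjective_units (K : Type*) [Field K] [IsAlgClosed K] {n : ℤ}
    (hn : n ≠ 0) : Function.Surjective (fun u : Kˣ => u ^ n) := by
  intro x
  obtain ⟨z, hz⟩ := IsAlgClosed.exists_pow_nat_eq (x : K) (Int.natAbs_pos.mpr hn)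
  have hz0 : z ≠ 0 := by
    rintro rfl
    exact x.ne_zero (by simpa [hn] using hz.symm)
  have hzx : Units.mk0 z hz0 ^ n.natAbs = x := Units.ext (by simpa using hz)
  rcases Int.natAbs_eq n with hpos | hneg
  · exact ⟨Units.mk0 z hz0, show _ ^ n = x by rw [hpos, zpow_natCast, hzx]⟩
  · exact ⟨(Units.mk0 z hz0)⁻¹, show _ ^ n = x by
      rw [hneg, inv_zpow', neg_neg, zpow_natCast, hzx]⟩

noncomputable instance IsAlgClosed.divisibleByAdditiveUnits (K : Type*) [Field K]
    [IsAlgClosed K] : DivisibleBy (Additive Kˣ) ℤ :=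
  divisibleByOfSMulRightSurj _ _ fun hn x =>
    let ⟨u, hu⟩ := IsAlgClosed.zpow_surjective_units K hn x.toMul
    ⟨Additive.ofMul u, congrArg Additive.ofMul hu⟩

section FreeAbelian

variable {M : Type*} [AddCommGroup M]

theorem AddEquiv.exists_eq_pow_smul_of_apply_eq_smul (σ : M ≃+ M) {q : ℤ} {m : M}
    (hm : σ m = q • m) (j : ℕ) : ∃ m', m = q ^ j • m' := by
  induction j generalizing m with
  | zero => exact ⟨m, by simp⟩
  | succ j ih =>
    have hm_eq : m = q • σ.symm m := by
      rw [← map_zsmul, ← hm, σ.symm_apply_apply]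
    obtain ⟨m', hm'⟩ := ih (m := σ.symm m) (by rw [σ.apply_symm_apply, ← hm_eq])
    exact ⟨m', by rw [hm_eq, hm', smul_smul, pow_succ']⟩

theorem Module.Free.eq_zero_of_forall_exists_eq_pow_smul [Module.Free ℤ M] {q : ℤ}
    (hq : q.natAbs ≠ 1) {m : M} (hm : ∀ j : ℕ, ∃ m', m = q ^ j • m') : m = 0 := by
  let b := Module.Free.chooseBasis ℤ M
  suffices b.repr m = 0 from b.repr.map_eq_zero_iff.mp this
  ext i
  by_contra hi
  obtain ⟨j, hj⟩ := Int.finiteMultiplicity_iff.mpr ⟨hq, hi⟩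
  obtain ⟨m', rfl⟩ := hm (j + 1)
  exact hj ⟨b.repr m' i, by simp⟩

theorem AddEquiv.injective_zsmul_sub [Module.Free ℤ M] (σ : M ≃+ M) {q : ℤ}
    (hq : q.natAbs ≠ 1) : Function.Injective (q • AddMonoidHom.id M - σ.toAddMonoidHom) := by
  refine (injective_iff_map_eq_zero _).mpr fun m hm => ?_
  have hσ : σ m = q • m := (sub_eq_zero.mp hm).symm
  exact Module.Free.eq_zero_of_forall_exists_eq_pow_smul hq
    (σ.exists_eq_pow_smul_of_apply_eq_smul hσ)

theorem AddEquiv.exists_eq_zsmul_sub_comp [Module.Free ℤ M] {A : Type*} [AddCommGroup A]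
    [DivisibleBy A ℤ] (σ : M ≃+ M) {q : ℤ} (hq : q.natAbs ≠ 1) (h : M →+ A) :
    ∃ f : M →+ A, ∀ m : M, h m = q • f m - f (σ m) := by
  obtain ⟨f, hf⟩ := (Module.Baer.of_divisible A).extension_property_addMonoidHom _
    (σ.injective_zsmul_sub hq) h
  exact ⟨f, fun m => by simp [← hf]⟩

end FreeAbelian

theorem h1_vanish_hom_to_units_general (k : Type*) [Field k] [Fintype k]
    (q : ℕ) (hq : Fintype.card k = q)
    (M : Type*) [AddCommGroup M] [Module.Free ℤ M]
    (σ : M ≃+ M) (h : M →+ Additive (AlgebraicClosure k)ˣ) :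
    ∃ f : M →+ Additive (AlgebraicClosure k)ˣ,
      ∀ m : M, h m = q • f m - f (σ m) := by
  have hq1 : (q : ℤ).natAbs ≠ 1 := by
    rw [Int.natAbs_natCast]
    exact (hq ▸ Fintype.one_lt_card).ne'
  obtain ⟨f, hf⟩ := σ.exists_eq_zsmul_sub_comp hq1 h
  exact ⟨f, fun m => by rw [hf, natCast_zsmul]⟩

/-- Let `k` be a finite field with `q` elements and `k̄` an algebraic closure of `k`.
If `M` is a finitely generated free abelian group with an automorphism `σ`, then every
group homomorphism `h : M → k̄ˣ` is of the form `h m = f m ^ q * (f (σ m))⁻¹` for some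
group homomorphism `f : M → k̄ˣ` (written additively below);
i.e. `H¹(𝔴, Hom(M, k̄ˣ)) = 0`. -/
theorem h1_vanish_hom_to_units (k : Type*) [Field k] [Fintype k]
    (q : ℕ) (hq : Fintype.card k = q)
    (M : Type*) [AddCommGroup M] [Module.Free ℤ M] [Module.Finite ℤ M]
    (σ : M ≃+ M) (h : M →+ Additive (AlgebraicClosure k)ˣ) :
    ∃ f : M →+ Additive (AlgebraicClosure k)ˣ,
      ∀ m : M, h m = q • f m - f (σ m) :=
  h1_vanish_hom_to_units_general k q hq M σ h
end

section
/- Let k be a finite field with q elements and k̄ an algebraic closure of k. Let M be a finitely generated free abelian group and σ an automorphism of M. Then for every additive group homomorphism h : M → (k̄, +) there exists an additive group homomorphism f : M → (k̄, +) such that h(m) = f(m)^q − f(σm) for all m ∈ M. (Equivalently, H^1(𝔴, Hom(M, k̄)) = 0, where the Weil group 𝔴 ≅ ℤ of k acts on Hom(M, k̄) through σ on M and Frobenius x ↦ x^q on k̄.) -/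
/-!
Let `p` be the characteristic of `k`. Since `End(M) ⧸ p End(M)` is finite, some power `σ ^ u`
(`u > 0`) is congruent to the identity modulo `p`, so precomposition `S` with `σ` satisfies
`S ^ u = 1` on `Hom(M, k̄)`. Postcomposition `F` with `x ↦ x ^ q` commutes with `S`, hence
`F ^ u - S ^ u = (F - S) * ∑ i < u, F ^ i * S ^ (u - 1 - i)` and it suffices to solve
`f₀ ^ (q ^ u) - f₀ = h`. As `k̄` is algebraically closed, `x ↦ x ^ (q ^ u) - x` is a surjective
additive map of `k̄`, and `f₀` exists because `M` is projective.
-/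

open Finset

theorem IsUnit.exists_pow_eq_one_add_nsmul {R : Type*} [Ring R] [Module.Finite ℤ R] {x : R}
    (hx : IsUnit x) {n : ℕ} (hn : n ≠ 0) : ∃ u, 0 < u ∧ ∃ y : R, x ^ u = 1 + n • y := by
  let N : Submodule ℤ R := LinearMap.range ((n : ℤ) • LinearMap.id)
  have : Finite (R ⧸ N) := by
    refine Module.finite_of_fg_torsion _ fun z => ?_
    induction z using Submodule.Quotient.induction_on with | _ y
    refine ⟨⟨n, mem_nonZeroDivisors_of_ne_zero (by exact_mod_cast hn)⟩, ?_⟩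
    simp [← Submodule.Quotient.mk_smul, N]
  -- pigeonhole on the powers of `x` in the finite group `R ⧸ nR`
  obtain ⟨i, j, hij, hxij⟩ := Set.Finite.exists_lt_map_eq_of_forall_mem
    (f := fun k => (Submodule.Quotient.mk (x ^ k) : R ⧸ N)) (fun _ => Set.mem_univ _)
    Set.finite_univ
  obtain ⟨y, hy⟩ := (Submodule.Quotient.eq N).mp hxij.symm
  obtain ⟨v, rfl⟩ := hx
  refine ⟨j - i, by omega, ((v ^ i)⁻¹ : Rˣ) * y, ?_⟩
  have hy' : n • y = (v : R) ^ i * ((v : R) ^ (j - i) - 1) := by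
    rw [mul_sub, mul_one, ← pow_add, Nat.add_sub_cancel' hij.le, ← hy]
    simp
  rw [← mul_smul_comm, hy', ← mul_assoc]
  simp only [← Units.val_pow_eq_pow_val, Units.inv_mul, one_mul, add_sub_cancel]

theorem AddEquiv.exists_iterate_eq_add_nsmul {M : Type*} [AddCommGroup M] [Module.Free ℤ M]
    [Module.Finite ℤ M] (σ : M ≃+ M) {n : ℕ} (hn : n ≠ 0) :
    ∃ u, 0 < u ∧ ∃ τ : M →+ M, ∀ m, σ^[u] m = m + n • τ m := by
  have hσ : IsUnit (σ.toIntLinearEquiv : Module.End ℤ M) :=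
    (Module.End.isUnit_iff _).mpr σ.bijective
  obtain ⟨u, hu, τ, hτ⟩ := hσ.exists_pow_eq_one_add_nsmul hn
  refine ⟨u, hu, τ.toAddMonoidHom, fun m => ?_⟩
  simpa [Module.End.pow_apply] using LinearMap.congr_fun hτ m

theorem IsAlgClosed.exists_pow_sub_eq {K : Type*} [Field K] [IsAlgClosed K] {Q : ℕ} (hQ : 1 < Q)
    (c : K) : ∃ z, z ^ Q - z = c := by
  open Polynomial in
  have hdeg : (X ^ Q - X - C c : K[X]).degree = Q := by
    rw [sub_sub, degree_sub_eq_left_of_degree_lt] <;> rw [degree_X_pow]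
    rw [degree_X_add_C]; exact_mod_cast hQ
  obtain ⟨z, hz⟩ := IsAlgClosed.exists_root (X ^ Q - X - C c : K[X])
    (by rw [hdeg]; exact_mod_cast (by omega : Q ≠ 0))
  exact ⟨z, sub_eq_zero.mp (by simpa using hz)⟩

theorem exists_addMonoidHom_pow_sub_eq {K : Type*} [Field K] [IsAlgClosed K] (p : ℕ) [ExpChar K p]
    {N : ℕ} (hN : 1 < p ^ N) {M : Type*} [AddCommGroup M] [Module.Projective ℤ M] (h : M →+ K) :
    ∃ f : M →+ K, ∀ m, f m ^ p ^ N - f m = h m := by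
  let ψ : K →+ K := (iterateFrobenius K p N).toAddMonoidHom - AddMonoidHom.id K
  obtain ⟨f, hf⟩ := Module.projective_lifting_property ψ.toIntLinearMap h.toIntLinearMap
    (IsAlgClosed.exists_pow_sub_eq hN)
  exact ⟨f.toAddMonoidHom, fun m => LinearMap.congr_fun hf m⟩

namespace AddMonoidHom

variable {M N : Type*} [AddCommMonoid M] [AddCommMonoid N]

theorem compHom_iterate_apply (φ : N →+ N) (k : ℕ) (f : M →+ N) (m : M) :
    (⇑(compHom φ))^[k] f m = φ^[k] (f m) := by
  induction k generalizing f with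
  | zero => rfl
  | succ k ih => rw [Function.iterate_succ_apply, Function.iterate_succ_apply]; exact ih _

theorem compHom'_iterate_apply (τ : M →+ M) (k : ℕ) (f : M →+ N) (m : M) :
    (⇑(compHom' τ))^[k] f m = f (τ^[k] m) := by
  induction k generalizing m with
  | zero => rfl
  | succ k ih => rw [Function.iterate_succ_apply', Function.iterate_succ_apply]; exact ih _

end AddMonoidHom

/-- Let `k` be a finite field with `q` elements and `k̄` an algebraic closure of `k`.
If `M` is a finitely generated free abelian group with an automorphism `σ`, then every
additive group homomorphism `h : M → (k̄, +)` is of the form `h m = (f m) ^ q - f (σ m)`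
for some additive group homomorphism `f : M → (k̄, +)`;
i.e. `H¹(𝔴, Hom(M, k̄)) = 0`. -/
theorem h1_vanish_hom_to_additive (k : Type*) [Field k] [Fintype k]
    (q : ℕ) (hq : Fintype.card k = q)
    (M : Type*) [AddCommGroup M] [Module.Free ℤ M] [Module.Finite ℤ M]
    (σ : M ≃+ M) (h : M →+ AlgebraicClosure k) :
    ∃ f : M →+ AlgebraicClosure k,
      ∀ m : M, h m = (f m) ^ q - f (σ m) := by
  obtain ⟨n, hp, hcard⟩ := FiniteField.card k (ringChar k)
  set p := ringChar k
  have : Fact p.Prime := ⟨hp⟩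
  have : CharP (AlgebraicClosure k) p :=
    charP_of_injective_algebraMap (algebraMap k _).injective p
  obtain ⟨u, hu, τ, hτ⟩ := σ.exists_iterate_eq_add_nsmul hp.ne_zero
  obtain ⟨f₀, hf₀⟩ :=
    exists_addMonoidHom_pow_sub_eq p (N := n * u) (Nat.one_lt_pow (by positivity) hp.one_lt) h
  let F : AddMonoid.End (M →+ AlgebraicClosure k) :=
    AddMonoidHom.compHom (iterateFrobenius _ p n).toAddMonoidHom
  let S : AddMonoid.End (M →+ AlgebraicClosure k) := AddMonoidHom.compHom' σ.toAddMonoidHom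
  have hFS : Commute F S := rfl
  have hS : S ^ u = 1 := by
    ext f m
    refine (AddMonoidHom.compHom'_iterate_apply σ.toAddMonoidHom u f m).trans ?_
    change f (σ^[u] m) = f m
    rw [hτ, map_add, map_nsmul, nsmul_eq_mul, CharP.cast_eq_zero, zero_mul, add_zero]
  have hF : (F ^ u - S ^ u) f₀ = h := by
    rw [hS]
    ext m
    refine (congrArg (· - f₀ m) (AddMonoidHom.compHom_iterate_apply _ u f₀ m)).trans ?_
    rw [← hf₀, ← iterateFrobenius_def, coe_iterateFrobenius_mul]
    rfl
  refine ⟨(∑ i ∈ range u, F ^ i * S ^ (u - 1 - i)) f₀, fun m => ?_⟩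
  rw [← hF, ← hFS.mul_geom_sum₂, ← hq, hcard]
  rfl
end

section
/- Let M be a finitely generated free abelian group, A an automorphism of M, and q an integer with |q| ≥ 2. Then the endomorphism of the quotient group (M ⊗_ℤ ℚ)/M induced by the map x ↦ (A ⊗ 1)(x) − q·x on M ⊗_ℤ ℚ is surjective. -/
/-!
An eigenvalue of an automorphism of a finite free module over a domain is a root of the
characteristic polynomial, so it divides the constant term `± det`, which is a unit. Hence for
`|q| ≥ 2` the map `A - q` is injective on `M`. Tensoring with the flat `ℤ`-module `ℚ` keeps it
injective, and an injective endomorphism of the finite-dimensional `ℚ`-space `M ⊗ ℚ` is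
surjective. So `A ⊗ 1 - q` is already surjective on `M ⊗ ℚ`, before passing to the quotient by `M`.
-/

open Module

section

variable {R M : Type*} [CommRing R] [IsDomain R] [AddCommGroup M] [Module R M]
  [Module.Free R M] [Module.Finite R M]

theorem LinearEquiv.isUnit_of_hasEigenvalue (e : M ≃ₗ[R] M) {μ : R}
    (h : End.HasEigenvalue (e : End R M) μ) : IsUnit μ := by
  have hroot := (End.hasEigenvalue_iff_isRoot_charpoly _ μ).1 h
  have hdet : μ ∣ LinearMap.det (e : End R M) := by
    rw [LinearMap.det_eq_sign_charpoly_coeff]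
    exact hroot.dvd_coeff_zero.mul_left _
  exact isUnit_of_dvd_unit hdet e.isUnit_det'

theorem LinearEquiv.injective_sub_smul_of_not_isUnit (e : M ≃ₗ[R] M) {μ : R}
    (hμ : ¬IsUnit μ) : Function.Injective ((e : End R M) - μ • (1 : End R M)) := by
  rw [← LinearMap.ker_eq_bot, ← End.eigenspace_def]
  by_contra h
  exact hμ (e.isUnit_of_hasEigenvalue (End.hasEigenvalue_iff.2 h))

end

theorem LinearMap.rTensor_surjective_of_injective {R K M : Type*} [CommRing R] [Field K]
    [Algebra R K] [Module.Flat R K] [AddCommGroup M] [Module R M] [Module.Finite R M]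
    {f : End R M} (hf : Function.Injective f) : Function.Surjective (f.rTensor K) := by
  have hbase : Function.Surjective (f.baseChange K) :=
    LinearMap.injective_iff_surjective.1 <| by
      rw [LinearMap.baseChange_eq_ltensor]
      exact Module.Flat.lTensor_preserves_injective_linearMap f hf
  rw [← LinearMap.comm_comp_lTensor_comp_comm_eq, LinearMap.coe_comp, LinearMap.coe_comp,
    ← LinearMap.baseChange_eq_ltensor]
  exact (TensorProduct.comm R K M).surjective.comp
    (hbase.comp (TensorProduct.comm R M K).surjective)

/-- Let `M` be a finitely generated free abelian group, `A` an automorphism of `M`, and `q`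
an integer with `|q| ≥ 2`.  The endomorphism of `(M ⊗_ℤ ℚ)/M` induced by
`x ↦ (A ⊗ 1) x − q • x` is surjective: for every `y ∈ M ⊗_ℤ ℚ` there is `x ∈ M ⊗_ℤ ℚ`
with `(A ⊗ 1) x − q • x − y ∈ M` (where `M` sits inside `M ⊗_ℤ ℚ` via `m ↦ m ⊗ 1`). -/
theorem surjective_induced_on_rationalization_quotient
    (M : Type*) [AddCommGroup M] [Module.Free ℤ M] [Module.Finite ℤ M]
    (A : M ≃+ M) (q : ℤ) (hq : 2 ≤ |q|) :
    ∀ y : TensorProduct ℤ M ℚ, ∃ x : TensorProduct ℤ M ℚ,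
      (LinearMap.rTensor ℚ A.toAddMonoidHom.toIntLinearMap) x - q • x - y ∈
        LinearMap.range ((TensorProduct.mk ℤ M ℚ).flip 1) := by
  intro y
  have hq_not_unit : ¬IsUnit q := by
    rw [Int.isUnit_iff_abs_eq]
    omega
  obtain ⟨x, hx⟩ := LinearMap.rTensor_surjective_of_injective (K := ℚ)
    (A.toIntLinearEquiv.injective_sub_smul_of_not_isUnit hq_not_unit) y
  refine ⟨x, ?_⟩
  have hsplit : LinearMap.rTensor ℚ A.toAddMonoidHom.toIntLinearMap x - q • x =
      LinearMap.rTensor ℚ ((A.toIntLinearEquiv : End ℤ M) - q • (1 : End ℤ M)) x := by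
    rw [LinearMap.rTensor_sub, LinearMap.rTensor_smul, End.one_eq_id, LinearMap.rTensor_id]
    rfl
  rw [hsplit, hx, sub_self]
  exact zero_mem _
end

section
/- Let p be a prime. Every additive group homomorphism from the group ℤ_p of p-adic integers to the group ℤ of integers is zero; that is, Hom_ℤ(ℤ_p, ℤ) = 0. -/
/-!
Every natural number `n` prime to `p` is a unit of `ℤ_[p]`, so every element of `ℤ_[p]` is
divisible by `n`, and hence so is its image `f x` in `ℤ`. Taking `n = p * |f x| + 1`, a
divisor of `f x` larger than `|f x|`, forces `f x = 0`.
-/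

theorem Int.eq_zero_of_forall_coprime_dvd {p : ℕ} (hp : p ≠ 0) {z : ℤ}
    (h : ∀ n : ℕ, p.Coprime n → (n : ℤ) ∣ z) : z = 0 := by
  have hcop : p.Coprime (p * z.natAbs + 1) :=
    (Nat.coprime_mul_left_add_right _ _ _).2 (Nat.coprime_one_right p)
  refine Int.eq_zero_of_dvd_of_natAbs_lt_natAbs (h _ hcop) ?_
  rw [Int.natAbs_natCast]
  have := Nat.le_mul_of_pos_left z.natAbs (Nat.pos_of_ne_zero hp)
  omega

theorem AddMonoidHom.natCast_dvd_apply_of_isUnit {R S : Type*} [Semiring R] [Semiring S]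
    (f : R →+ S) {n : ℕ} (hn : IsUnit (n : R)) (x : R) : (n : S) ∣ f x := by
  obtain ⟨y, rfl⟩ := hn.dvd (a := x)
  rw [← nsmul_eq_mul, map_nsmul, nsmul_eq_mul]
  exact dvd_mul_right _ _

theorem PadicInt.isUnit_natCast_of_coprime {p : ℕ} [Fact p.Prime] {n : ℕ} (h : p.Coprime n) :
    IsUnit (n : ℤ_[p]) :=
  PadicInt.isUnit_iff.2 (PadicInt.norm_natCast_eq_one_iff.2 h)

/-- Every additive group homomorphism from the p-adic integers to ℤ is zero. -/
theorem hom_padicInt_to_int_eq_zero (p : ℕ) [Fact p.Prime] (f : ℤ_[p] →+ ℤ) :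
    f = 0 := by
  ext x
  exact Int.eq_zero_of_forall_coprime_dvd (Fact.out : p.Prime).ne_zero fun n hn =>
    f.natCast_dvd_apply_of_isUnit (PadicInt.isUnit_natCast_of_coprime hn) x
end

section
/- Let p be a prime and K a finite field extension of ℚ_p, with ring of integers O_K (the integral closure of ℤ_p in K), and let U_K = O_Kˣ be the group of units of O_K. Then every group homomorphism from U_K to the additive group ℤ of integers is trivial; that is, Hom_ℤ(U_K, ℤ) = 0. -/
/-!
`O_K` is a finite `ℤ_p`-module, hence complete for the `𝔪`-adic topology (`𝔪` the maximal ideal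
of `ℤ_p`), hence Henselian along `𝔪 O_K`; and `A = O_K / 𝔪 O_K` is finite. For
`ℓ = 1 + |Aˣ| |A|`, `ℓ` is `1` in `A` and `ℓ - 1` kills `Aˣ`. So for a unit `u`, `u⁻¹ ^ (ℓ - 1)`
is `≡ 1` and Hensel's lemma gives it an `ℓ`-th root `a`, and then `u = (u a) ^ ℓ`. Every unit
being an `ℓ`-th power, its image in `ℤ` is divisible by every power of `ℓ`, hence is `0`.
-/

open IsLocalRing Polynomial

section AdicComplete

variable {R : Type*} [CommRing R] (I : Ideal R)

theorem IsPrecomplete.of_finite (M : Type*) [AddCommGroup M] [Module R M] [IsPrecomplete I R]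
    [Module.Finite R M] : IsPrecomplete I M := by
  rw [← AdicCompletion.of_surjective_iff]
  intro y
  obtain ⟨t, rfl⟩ := AdicCompletion.ofTensorProduct_surjective_of_finite I M y
  induction t using TensorProduct.induction_on with
  | zero => exact ⟨0, map_zero _⟩
  | tmul r x =>
    obtain ⟨r, rfl⟩ := AdicCompletion.of_surjective I R r
    refine ⟨r • x, ?_⟩
    rw [AdicCompletion.ofTensorProduct_tmul, map_smul, ← algebraMap_smul (AdicCompletion I R),
      AdicCompletion.algebraMap_apply, Algebra.algebraMap_self_apply]
  | add a b ha hb =>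
    obtain ⟨x, hx⟩ := ha
    obtain ⟨y, hy⟩ := hb
    exact ⟨x + y, by rw [map_add, hx, hy, map_add]⟩

theorem IsAdicComplete.of_finite [IsNoetherianRing R] [IsAdicComplete I R]
    (M : Type*) [AddCommGroup M] [Module R M] [Module.Finite R M] : IsAdicComplete I M :=
  { IsHausdorff.of_le_jacobson I M (IsAdicComplete.le_jacobson_bot I), IsPrecomplete.of_finite I M
    with }

variable (S : Type*) [CommRing S] [Algebra R S] [Module.Finite R S]

theorem IsAdicComplete.map_algebraMap_of_finite [IsNoetherianRing R] [IsAdicComplete I R] :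
    IsAdicComplete (I.map (algebraMap R S)) S :=
  (IsAdicComplete.map_algebraMap_iff I S).2 (.of_finite I S)

theorem Ideal.finite_quotient_map_algebraMap [Finite (R ⧸ I)] :
    Finite (S ⧸ I.map (algebraMap R S)) :=
  have : Module.Finite (R ⧸ I) (S ⧸ I.map (algebraMap R S)) :=
    .of_restrictScalars_finite R _ _
  Module.finite_of_finite (R ⧸ I)

end AdicComplete

theorem MonoidHom.eq_one_of_forall_exists_pow_eq {G : Type*} [Monoid G] {n : ℕ} (hn : 2 ≤ n)
    (h : ∀ u : G, ∃ v, v ^ n = u) (f : G →* Multiplicative ℤ) : f = 1 := by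
  have hdvd : ∀ (k : ℕ) (u : G), (n : ℤ) ^ k ∣ (f u).toAdd := by
    intro k
    induction k with
    | zero => simp
    | succ k ih =>
      intro u
      obtain ⟨v, rfl⟩ := h u
      rw [map_pow, toAdd_pow, nsmul_eq_mul, pow_succ']
      exact mul_dvd_mul_left _ (ih v)
  refine MonoidHom.ext fun u => Multiplicative.toAdd.injective ?_
  refine Int.eq_zero_of_dvd_of_natAbs_lt_natAbs (hdvd (f u).toAdd.natAbs u) ?_
  rw [Int.natAbs_pow, Int.natAbs_natCast]
  exact Nat.lt_pow_self hn

section Henselian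

variable {S : Type*} [CommRing S] (J : Ideal S) [HenselianRing S J]

theorem HenselianRing.exists_pow_eq_of_sub_one_mem {n : ℕ} (hn : n ≠ 0)
    (hunit : IsUnit (n : S ⧸ J)) {g : S} (hg : g - 1 ∈ J) : ∃ a : S, a ^ n = g := by
  have hder : derivative (X ^ n - C g) = C (n : S) * X ^ (n - 1) := by
    rw [derivative_sub, derivative_C, sub_zero, derivative_X_pow]
  obtain ⟨a, ha, -⟩ := HenselianRing.is_henselian (X ^ n - C g) (monic_X_pow_sub_C g hn) 1
    (by simpa using J.neg_mem hg) (by simpa [hder] using hunit)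
  exact ⟨a, by simpa [sub_eq_zero] using ha⟩

theorem HenselianRing.exists_units_pow_succ_eq {k : ℕ} (hk : ∀ w : (S ⧸ J)ˣ, w ^ k = 1)
    (hunit : IsUnit ((k + 1 : ℕ) : S ⧸ J)) (u : Sˣ) : ∃ v : Sˣ, v ^ (k + 1) = u := by
  have hg : ((u⁻¹ ^ k : Sˣ) : S) - 1 ∈ J := by
    rw [← Ideal.Quotient.eq, map_one]
    simpa using congrArg Units.val (hk (Units.map (Ideal.Quotient.mk J : S →* S ⧸ J) u⁻¹))
  obtain ⟨a, ha⟩ := exists_pow_eq_of_sub_one_mem J k.succ_ne_zero hunit hg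
  have haU : IsUnit a := (isUnit_pow_iff k.succ_ne_zero).1 (ha ▸ Units.isUnit _)
  have hv : haU.unit ^ (k + 1) = u⁻¹ ^ k :=
    Units.ext (by rw [Units.val_pow_eq_pow_val, IsUnit.unit_spec, ha])
  refine ⟨u * haU.unit, ?_⟩
  rw [mul_pow, hv, inv_pow, pow_succ', mul_inv_cancel_right]

theorem MonoidHom.eq_one_of_henselianRing_of_finite_quotient [Finite (S ⧸ J)]
    (f : Sˣ →* Multiplicative ℤ) : f = 1 := by
  set k := Nat.card (S ⧸ J)ˣ * Nat.card (S ⧸ J)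
  have hk : ∀ w : (S ⧸ J)ˣ, w ^ k = 1 := fun w => by rw [pow_mul, pow_card_eq_one', one_pow]
  have hunit : ((k + 1 : ℕ) : S ⧸ J) = 1 := by
    have hcard : (Nat.card (S ⧸ J) : S ⧸ J) = 0 := by rw [← nsmul_one, card_nsmul_eq_zero']
    rw [Nat.cast_succ, Nat.cast_mul, hcard, mul_zero, zero_add]
  have two_le : 2 ≤ k + 1 := Nat.succ_le_succ (Nat.mul_pos Nat.card_pos Nat.card_pos)
  exact f.eq_one_of_forall_exists_pow_eq two_le
    (HenselianRing.exists_units_pow_succ_eq J hk (hunit ▸ isUnit_one))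

end Henselian

/-- Let `K` be a finite extension of `ℚ_p`, `O_K` the integral closure of `ℤ_p` in `K`,
and `U_K = O_Kˣ` its group of units.  Every group homomorphism from the multiplicative
group `U_K` to the additive group `ℤ` is trivial. -/
theorem hom_unitGroup_to_int_eq_one (p : ℕ) [Fact p.Prime]
    (K : Type*) [Field K] [Algebra ℚ_[p] K] [FiniteDimensional ℚ_[p] K]
    [Algebra ℤ_[p] K] [IsScalarTower ℤ_[p] ℚ_[p] K]
    (f : (integralClosure ℤ_[p] K)ˣ →* Multiplicative ℤ) :
    f = 1 := by
  have : Module.Finite ℤ_[p] (integralClosure ℤ_[p] K) :=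
    IsIntegralClosure.finite ℤ_[p] ℚ_[p] K _
  have : Finite (ℤ_[p] ⧸ maximalIdeal ℤ_[p]) :=
    Finite.of_equiv _ PadicInt.residueField.symm.toEquiv
  have := IsAdicComplete.map_algebraMap_of_finite (maximalIdeal ℤ_[p]) (integralClosure ℤ_[p] K)
  have := Ideal.finite_quotient_map_algebraMap (maximalIdeal ℤ_[p]) (integralClosure ℤ_[p] K)
  exact f.eq_one_of_henselianRing_of_finite_quotient
    ((maximalIdeal ℤ_[p]).map (algebraMap ℤ_[p] _))
end

section
/- Let M be a finitely generated free abelian group and σ an automorphism of M, and let M^∨ = Hom(M, ℤ) with σ acting by (σ·f)(m) = f(σ⁻¹m). Then: (a) the map sending a homomorphism g : M_σ → ℤ to its composite with the projection M → M_σ is an isomorphism from Hom(M_σ, ℤ) onto the fixed points (M^∨)^σ = {f ∈ M^∨ : f∘σ = f}; and (b) the map (M^∨)_σ → Hom(M^σ, ℤ) induced by restricting homomorphisms f : M → ℤ to the fixed submodule M^σ is well defined and surjective, and its kernel is a finite group isomorphic to Ext¹_ℤ(M_σ, ℤ), equivalently to Hom((M_σ)_tors, ℚ/ℤ), where (M_σ)_tors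 is the torsion subgroup of M_σ. -/
/-!
Write `T = σ - 1`, so that `M^σ = ker T` and `(σ - 1)M = T(M)`. Part (a) and the vanishing of
restriction on coboundaries are formal. A homomorphism `M → ℤ` vanishing on `ker T` is `g ∘ T`
for a unique `g : T(M) → ℤ`, and it is a coboundary exactly when `g` extends to `M`; so the kernel
of `(M^∨)_σ → Hom(M^σ, ℤ)` is the cokernel of `Hom(M, ℤ) → Hom(T(M), ℤ)`, i.e. `Ext¹(M_σ, ℤ)`.
A Smith normal form of `T(M) ⊆ M` with elementary divisors `aᵢ` identifies both this cokernel and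
the torsion of `M_σ` with `∏ ℤ/aᵢ`, a group which is its own `ℚ/ℤ`-dual. Surjectivity of the
restriction holds because `M / ker T ≅ T(M)` is free, so `ker T` is a direct summand of `M`.
-/

/-- The fixed-point subgroup `M^σ = ker (σ − 1)`, i.e. `H⁰(𝔴, M)`. -/
def fixedSub {M : Type*} [AddCommGroup M] (σ : M ≃+ M) : AddSubgroup M :=
  (σ.toAddMonoidHom - AddMonoidHom.id M).ker

/-- The subgroup `(σ − 1) M`, whose quotient is the coinvariants `M_σ = H¹(𝔴, M)`. -/
def coinvRange {M : Type*} [AddCommGroup M] (σ : M ≃+ M) : AddSubgroup M :=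
  (σ.toAddMonoidHom - AddMonoidHom.id M).range

/-- The action of an automorphism `σ` of `M` on homomorphisms `M →+ A`,
given by `(σ · f) m = f (σ⁻¹ m)`. -/
def dualAct {M : Type*} [AddCommGroup M] (A : Type*) [AddCommGroup A] (σ : M ≃+ M) :
    (M →+ A) ≃+ (M →+ A) where
  toFun f := f.comp σ.symm.toAddMonoidHom
  invFun f := f.comp σ.toAddMonoidHom
  left_inv f := by ext m; simp
  right_inv f := by ext m; simp
  map_add' f g := by ext m; simp

/-- Restriction of homomorphisms `M →+ ℤ` to the fixed-point subgroup `M^σ`. -/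
def restrictHom {M : Type*} [AddCommGroup M] (σ : M ≃+ M) :
    (M →+ ℤ) →+ ((fixedSub σ) →+ ℤ) where
  toFun f := f.comp (fixedSub σ).subtype
  map_zero' := rfl
  map_add' f g := rfl

section Coinvariants

open AddMonoidHom

variable {M A : Type*} [AddCommGroup M] [AddCommGroup A] (σ : M ≃+ M)

theorem mem_fixedSub_iff {m : M} : m ∈ fixedSub σ ↔ σ m = m := by
  simp [fixedSub, sub_eq_zero]

theorem mem_fixedSub_dualAct_iff {f : M →+ A} :
    f ∈ fixedSub (dualAct A σ) ↔ coinvRange σ ≤ f.ker := by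
  have fixed_iff : dualAct A σ f = f ↔ ∀ m, f (σ m) = f m := by
    rw [← (dualAct A σ).symm.injective.eq_iff, AddEquiv.symm_apply_apply, eq_comm,
      DFunLike.ext_iff]
    rfl
  rw [mem_fixedSub_iff, fixed_iff, coinvRange, range_le_ker_iff, DFunLike.ext_iff]
  simp [sub_eq_zero]

def coinvDualEquiv : ((M ⧸ coinvRange σ) →+ A) ≃+ fixedSub (dualAct A σ) where
  toFun g := ⟨g.comp (QuotientAddGroup.mk' _), (mem_fixedSub_dualAct_iff σ).2 fun x hx => by
    simp [(QuotientAddGroup.eq_zero_iff x).2 hx]⟩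
  invFun f := QuotientAddGroup.lift _ f ((mem_fixedSub_dualAct_iff σ).1 f.2)
  left_inv g := by ext; simp
  right_inv f := by ext; simp
  map_add' _ _ := rfl

theorem coinvRange_dualAct :
    coinvRange (dualAct A σ) = (compHom' (σ.toAddMonoidHom - AddMonoidHom.id M)).range := by
  ext f
  constructor
  · rintro ⟨g, rfl⟩
    refine ⟨-(g.comp σ.symm.toAddMonoidHom), ?_⟩
    ext m
    simp [dualAct]
  · rintro ⟨h, rfl⟩
    refine ⟨-(h.comp σ.toAddMonoidHom), ?_⟩
    ext m
    simp [dualAct]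
    abel

end Coinvariants

section Precomposition

open AddMonoidHom

variable {M M' : Type*} (A : Type*) [AddCommGroup M] [AddCommGroup M'] [AddCommGroup A]
  (T : M →+ M')

theorem range_compHom'_le_ker_compHom'_ker_subtype :
    (compHom' (P := A) T).range ≤ (compHom' (P := A) T.ker.subtype).ker := by
  rintro _ ⟨h, rfl⟩
  ext ⟨x, hx⟩
  simp [mem_ker.1 hx]

theorem compHom'_rangeRestrict_injective :
    Function.Injective (compHom' (P := A) T.rangeRestrict) :=
  fun _ _ h => (cancel_right T.rangeRestrict_surjective).1 h

theorem range_compHom'_rangeRestrict :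
    (compHom' (P := A) T.rangeRestrict).range = (compHom' (P := A) T.ker.subtype).ker := by
  ext f
  constructor
  · rintro ⟨g, rfl⟩
    ext ⟨x, hx⟩
    rw [← ker_rangeRestrict] at hx
    simp [mem_ker.1 hx]
  · intro hf
    have hker : T.rangeRestrict.ker ≤ f.ker := fun x hx => by
      rw [ker_rangeRestrict] at hx
      exact DFunLike.congr_fun hf ⟨x, hx⟩
    have hinv := Function.rightInverse_surjInv T.rangeRestrict_surjective
    exact ⟨T.rangeRestrict.liftOfRightInverse _ hinv ⟨f, hker⟩,
      T.rangeRestrict.liftOfRightInverse_comp _ hinv _⟩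

theorem map_range_compHom'_subtype :
    (compHom' (P := A) T.range.subtype).range.map (compHom' T.rangeRestrict) =
      (compHom' (P := A) T).range := by
  rw [map_range]
  rfl

noncomputable def kerRestrictQuotientEquiv :
    (compHom' (P := A) T.ker.subtype).ker ⧸
        (compHom' (P := A) T).range.addSubgroupOf (compHom' (P := A) T.ker.subtype).ker
      ≃+ (T.range →+ A) ⧸ (compHom' (P := A) T.range.subtype).range :=
  let e : (T.range →+ A) ≃+ (compHom' (P := A) T.ker.subtype).ker :=
    (ofInjective (compHom'_rangeRestrict_injective A T)).trans
      (AddEquiv.addSubgroupCongr (range_compHom'_rangeRestrict A T))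
  (QuotientAddGroup.congr _ _ e (by
    ext ⟨f, hf⟩
    rw [AddSubgroup.mem_map, AddSubgroup.mem_addSubgroupOf, ← map_range_compHom'_subtype A T,
      AddSubgroup.mem_map]
    simp only [Subtype.ext_iff]
    rfl)).symm

end Precomposition

theorem LinearMap.exists_leftInverse_ker_subtype {R M M' : Type*} [CommRing R] [IsDomain R]
    [IsPrincipalIdealRing R] [AddCommGroup M] [Module R M] [AddCommGroup M'] [Module R M']
    [Module.Finite R M] [Module.IsTorsionFree R M'] (T : M →ₗ[R] M') :
    ∃ r : M →ₗ[R] LinearMap.ker T, r ∘ₗ (LinearMap.ker T).subtype = LinearMap.id := by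
  -- `range T` is finitely generated and torsion-free, hence free and so projective.
  have : Module.Free R (LinearMap.range T) := Module.free_of_finite_type_torsion_free'
  obtain ⟨s, hs⟩ := Module.projective_lifting_property T.rangeRestrict LinearMap.id
    T.surjective_rangeRestrict
  have hTs : ∀ x, T (s (T.rangeRestrict x)) = T x := fun x =>
    congr_arg Subtype.val (LinearMap.congr_fun hs (T.rangeRestrict x))
  refine ⟨(LinearMap.id - s ∘ₗ T.rangeRestrict).codRestrict _ fun x => by simp [hTs], ?_⟩
  ext ⟨x, hx⟩
  simp [show T.rangeRestrict x = 0 from Subtype.ext hx]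

theorem restrictHom_surjective {M : Type*} [AddCommGroup M] [Module.Finite ℤ M]
    [Module.IsTorsionFree ℤ M] (σ : M ≃+ M) : Function.Surjective (restrictHom σ) := by
  obtain ⟨r, hr⟩ :=
    (σ.toAddMonoidHom - AddMonoidHom.id M).toIntLinearMap.exists_leftInverse_ker_subtype
  exact fun g => ⟨g.comp r.toAddMonoidHom, by ext x; exact congr_arg g (LinearMap.congr_fun hr x)⟩

namespace Module.Basis.SmithNormalForm

open AddMonoidHom

section CommRing

variable {ι R M : Type*} [CommRing R] [AddCommGroup M] [Module R M] {n : ℕ} {N : Submodule R M}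
  (snf : Basis.SmithNormalForm N ι n)

theorem a_ne_zero [Nontrivial R] (i : Fin n) : snf.a i ≠ 0 := by
  intro h
  apply snf.bN.ne_zero i
  ext
  simpa [h] using snf.snf i

theorem mem_iff {x : M} : x ∈ N ↔
    (∀ j ∉ Set.range snf.f, snf.bM.repr x j = 0) ∧ ∀ i, snf.a i ∣ snf.bM.repr x (snf.f i) := by
  constructor
  · intro hx
    lift x to N using hx
    refine ⟨fun j hj => snf.repr_eq_zero_of_notMem_range x hj, fun i => ⟨snf.bN.repr x i, ?_⟩⟩
    rw [snf.repr_apply_embedding_eq_repr_smul, map_smul, Finsupp.smul_apply, smul_eq_mul]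
  · rintro ⟨hzero, hdvd⟩
    choose c hc using hdvd
    let m : N := snf.bN.repr.symm (Finsupp.equivFunOnFinite.symm c)
    suffices x = m from this ▸ m.2
    refine snf.bM.ext_elem fun j => ?_
    by_cases hj : j ∈ Set.range snf.f
    · obtain ⟨i, rfl⟩ := hj
      simp [m, hc]
    · rw [hzero j hj, snf.repr_eq_zero_of_notMem_range m hj]

end CommRing

variable {ι M : Type*} [AddCommGroup M] {n : ℕ} {H : AddSubgroup M}
  (snf : Basis.SmithNormalForm H.toIntSubmodule ι n)

instance (i : Fin n) : NeZero (snf.a i).natAbs :=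
  ⟨Int.natAbs_ne_zero.2 (snf.a_ne_zero i)⟩

noncomputable def dualToZMod : (H →+ ℤ) →+ Π i, ZMod (snf.a i).natAbs :=
  AddMonoidHom.pi fun i => (Int.castAddHom _).comp (AddMonoidHom.eval (snf.bN i : H))

theorem ker_dualToZMod : snf.dualToZMod.ker = (compHom' (P := ℤ) H.subtype).range := by
  ext g
  have hdvd_iff : g ∈ snf.dualToZMod.ker ↔ ∀ i, snf.a i ∣ g (snf.bN i) := by
    simp only [mem_ker, funext_iff]
    exact forall_congr' fun i => (ZMod.intCast_zmod_eq_zero_iff_dvd _ _).trans Int.natAbs_dvd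
  rw [hdvd_iff]
  constructor
  · intro hdvd
    choose c hc using hdvd
    refine ⟨(snf.bM.constr ℤ (Function.extend snf.f c 0)).toAddMonoidHom, ?_⟩
    apply AddMonoidHom.toIntLinearMap_injective
    refine snf.bN.ext fun i => ?_
    show snf.bM.constr ℤ _ (snf.bN i : M) = g (snf.bN i)
    rw [snf.snf, map_smul, constr_basis, snf.f.injective.extend_apply, hc, smul_eq_mul]
  · rintro ⟨h, rfl⟩ i
    show snf.a i ∣ h (snf.bN i : M)
    rw [snf.snf, map_zsmul, smul_eq_mul]
    exact dvd_mul_right _ _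

theorem dualToZMod_surjective : Function.Surjective snf.dualToZMod := by
  intro v
  refine ⟨(snf.bN.constr ℤ fun i => ((v i).val : ℤ)).toAddMonoidHom, ?_⟩
  ext i
  show ((snf.bN.constr ℤ _ (snf.bN i) : ℤ) : ZMod _) = v i
  simp

noncomputable def dualCokerEquiv :
    (H →+ ℤ) ⧸ (compHom' (P := ℤ) H.subtype).range ≃+ Π i, ZMod (snf.a i).natAbs :=
  (QuotientAddGroup.quotientAddEquivOfEq snf.ker_dualToZMod.symm).trans
    (QuotientAddGroup.quotientKerEquivOfSurjective _ snf.dualToZMod_surjective)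

noncomputable def coordMod : M →+ Π i, ZMod (snf.a i).natAbs :=
  AddMonoidHom.pi fun i => (Int.castAddHom _).comp (snf.bM.coord (snf.f i)).toAddMonoidHom

theorem coordMod_eq_zero_iff {x : M} :
    snf.coordMod x = 0 ↔ ∀ i, snf.a i ∣ snf.bM.repr x (snf.f i) := by
  simp only [funext_iff]
  exact forall_congr' fun i => (ZMod.intCast_zmod_eq_zero_iff_dvd _ _).trans Int.natAbs_dvd

theorem le_ker_coordMod : H ≤ snf.coordMod.ker := fun _ hx =>
  snf.coordMod_eq_zero_iff.2 ((snf.mem_iff (x := _)).1 hx).2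

noncomputable def torsionToZMod :
    AddCommGroup.torsion (M ⧸ H) →+ Π i, ZMod (snf.a i).natAbs :=
  (QuotientAddGroup.lift H _ snf.le_ker_coordMod).comp (AddCommGroup.torsion _).subtype

theorem torsionToZMod_injective : Function.Injective snf.torsionToZMod := by
  rw [injective_iff_map_eq_zero]
  rintro ⟨x, hx⟩ hx0
  obtain ⟨m, rfl⟩ := QuotientAddGroup.mk_surjective x
  obtain ⟨k, hk, hkm⟩ := isOfFinAddOrder_iff_zsmul_eq_zero.1 hx
  have hkmH : k • m ∈ H := (QuotientAddGroup.eq_zero_iff _).1 hkm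
  refine Subtype.ext ((QuotientAddGroup.eq_zero_iff m).2 ((snf.mem_iff (x := m)).2 ⟨?_, ?_⟩))
  · intro j hj
    simpa [hk] using ((snf.mem_iff (x := k • m)).1 hkmH).1 j hj
  · exact snf.coordMod_eq_zero_iff.1 hx0

theorem torsionToZMod_surjective : Function.Surjective snf.torsionToZMod := by
  intro v
  set c : ι →₀ ℤ := Finsupp.embDomain snf.f
    (Finsupp.equivFunOnFinite.symm fun i => ((v i).val : ℤ))
  set m := snf.bM.repr.symm c
  have hm : snf.bM.repr m = c := snf.bM.repr.apply_symm_apply c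
  have hm_zero : ∀ j ∉ Set.range snf.f, snf.bM.repr m j = 0 := fun j hj => by
    rw [hm, Finsupp.embDomain_of_notMem_range _ _ _ hj]
  have hm_f : ∀ i, snf.bM.repr m (snf.f i) = (v i).val := fun i => by
    rw [hm, Finsupp.embDomain_apply_self]
    rfl
  have htors : IsOfFinAddOrder (m : M ⧸ H) := by
    refine isOfFinAddOrder_iff_zsmul_eq_zero.2 ⟨∏ i, snf.a i,
      Finset.prod_ne_zero_iff.2 fun i _ => snf.a_ne_zero i, ?_⟩
    rw [← QuotientAddGroup.mk_zsmul, QuotientAddGroup.eq_zero_iff]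
    refine snf.mem_iff.2 ⟨fun j hj => by simp [hm_zero j hj], fun i => ?_⟩
    rw [map_zsmul, Finsupp.smul_apply, smul_eq_mul]
    exact (Finset.dvd_prod_of_mem _ (Finset.mem_univ i)).mul_right _
  refine ⟨⟨m, htors⟩, funext fun i => ?_⟩
  show ((snf.bM.repr m (snf.f i) : ℤ) : ZMod _) = v i
  simp [hm_f]

noncomputable def torsionQuotientEquiv :
    AddCommGroup.torsion (M ⧸ H) ≃+ Π i, ZMod (snf.a i).natAbs :=
  AddEquiv.ofBijective _ ⟨snf.torsionToZMod_injective, snf.torsionToZMod_surjective⟩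

end Module.Basis.SmithNormalForm

section ZModDual

open AddMonoidHom

theorem ZMod.addMonoidHom_ext {n : ℕ} {A : Type*} [AddGroup A] {φ ψ : ZMod n →+ A}
    (h : φ 1 = ψ 1) : φ = ψ :=
  (cancel_right (f := Int.castAddHom (ZMod n)) ZMod.intCast_surjective).1
    (ext_int (by simpa using h))

section

variable (n : ℕ) [NeZero n]

theorem AddCircle.zsmul_inv_natCast_eq_zero_iff (k : ℤ) :
    k • (((n : ℚ)⁻¹ : ℚ) : AddCircle (1 : ℚ)) = 0 ↔ (n : ℤ) ∣ k := by
  have hn : (n : ℚ) ≠ 0 := NeZero.ne _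
  rw [← AddCircle.coe_zsmul, AddCircle.coe_eq_zero_iff]
  simp only [zsmul_eq_mul, mul_one, eq_mul_inv_iff_mul_eq₀ hn]
  constructor
  · rintro ⟨m, hm⟩
    exact ⟨m, by rw [mul_comm]; exact_mod_cast hm.symm⟩
  · rintro ⟨m, rfl⟩
    exact ⟨m, by push_cast; ring⟩

theorem AddCircle.exists_zsmul_inv_natCast_eq {a : AddCircle (1 : ℚ)} (ha : n • a = 0) :
    ∃ k : ℤ, k • (((n : ℚ)⁻¹ : ℚ) : AddCircle (1 : ℚ)) = a := by
  have hn : (n : ℚ) ≠ 0 := NeZero.ne _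
  obtain ⟨q, rfl⟩ := QuotientAddGroup.mk_surjective a
  rw [← AddCircle.coe_nsmul, AddCircle.coe_eq_zero_iff] at ha
  obtain ⟨k, hk⟩ := ha
  refine ⟨k, ?_⟩
  rw [← AddCircle.coe_zsmul, zsmul_eq_mul]
  rw [zsmul_eq_mul, mul_one, nsmul_eq_mul] at hk
  congr 1
  rw [hk]
  field_simp

noncomputable def ZMod.toAddCircleRat : ZMod n →+ AddCircle (1 : ℚ) :=
  ZMod.lift n ⟨zmultiplesHom _ (((n : ℚ)⁻¹ : ℚ) : AddCircle (1 : ℚ)),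
    (AddCircle.zsmul_inv_natCast_eq_zero_iff n n).2 dvd_rfl⟩

theorem ZMod.toAddCircleRat_intCast (k : ℤ) :
    ZMod.toAddCircleRat n k = k • (((n : ℚ)⁻¹ : ℚ) : AddCircle (1 : ℚ)) :=
  ZMod.lift_coe _ _ k

theorem ZMod.toAddCircleRat_injective : Function.Injective (ZMod.toAddCircleRat n) := by
  rw [injective_iff_map_eq_zero]
  intro x hx
  obtain ⟨k, rfl⟩ := ZMod.intCast_surjective x
  rw [ZMod.toAddCircleRat_intCast, AddCircle.zsmul_inv_natCast_eq_zero_iff] at hx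
  exact (ZMod.intCast_zmod_eq_zero_iff_dvd k n).2 hx

/-- `k ↦ (x ↦ k x / n)`. -/
noncomputable def ZMod.dualAddEquiv : ZMod n ≃+ (ZMod n →+ AddCircle (1 : ℚ)) :=
  AddEquiv.ofBijective ((compHom (ZMod.toAddCircleRat n)).comp AddMonoidHom.mul) <| by
    have happly : ∀ k x, (compHom (ZMod.toAddCircleRat n)).comp AddMonoidHom.mul k x =
        ZMod.toAddCircleRat n (k * x) := fun _ _ => rfl
    refine ⟨(injective_iff_map_eq_zero _).2 fun k hk => ?_, fun φ => ?_⟩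
    · apply ZMod.toAddCircleRat_injective n
      simpa [happly] using DFunLike.congr_fun hk 1
    · have hφ : n • φ 1 = 0 := by
        rw [← map_nsmul, nsmul_eq_mul, mul_one, ZMod.natCast_self, map_zero]
      obtain ⟨k, hk⟩ := AddCircle.exists_zsmul_inv_natCast_eq n hφ
      exact ⟨k, ZMod.addMonoidHom_ext <| by
        rw [happly, mul_one, ZMod.toAddCircleRat_intCast, hk]⟩

end

noncomputable def piZModDualAddEquiv {ι : Type*} [Fintype ι] [DecidableEq ι] (n : ι → ℕ)
    [∀ i, NeZero (n i)] : ((Π i, ZMod (n i)) →+ AddCircle (1 : ℚ)) ≃+ Π i, ZMod (n i) :=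
  (Pi.addMonoidHomAddEquiv _ _).trans
    (AddEquiv.piCongrRight fun i => (ZMod.dualAddEquiv (n i)).symm)

end ZModDual

theorem coinvRange_dualAct_le_ker_restrictHom {M : Type*} [AddCommGroup M] (σ : M ≃+ M) :
    coinvRange (dualAct ℤ σ) ≤ (restrictHom σ).ker := by
  rw [coinvRange_dualAct]
  exact range_compHom'_le_ker_compHom'_ker_subtype ℤ _

noncomputable def restrictHomKerQuotientEquiv {M : Type*} [AddCommGroup M] (σ : M ≃+ M) :
    (restrictHom σ).ker ⧸ (coinvRange (dualAct ℤ σ)).addSubgroupOf (restrictHom σ).ker ≃+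
      (coinvRange σ →+ ℤ) ⧸ (AddMonoidHom.compHom' (P := ℤ) (coinvRange σ).subtype).range :=
  have hcob : (coinvRange (dualAct ℤ σ)).addSubgroupOf (restrictHom σ).ker =
      (AddMonoidHom.compHom' (P := ℤ) (σ.toAddMonoidHom - AddMonoidHom.id M)).range.addSubgroupOf
        (restrictHom σ).ker := by
    rw [coinvRange_dualAct]
  (QuotientAddGroup.quotientAddEquivOfEq hcob).trans
    (kerRestrictQuotientEquiv ℤ (σ.toAddMonoidHom - AddMonoidHom.id M))

/-- Let `M` be a finitely generated free abelian group with automorphism `σ`, and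
`M^∨ = Hom(M, ℤ)` with `(σ · f) m = f (σ⁻¹ m)`.  Then (a) `g ↦ g ∘ (M → M_σ)` is an
isomorphism `Hom(M_σ, ℤ) ≅ (M^∨)^σ`; and (b) the restriction map
`(M^∨)_σ → Hom(M^σ, ℤ)` is well defined and surjective, with finite kernel isomorphic
to `Ext¹_ℤ(M_σ, ℤ) ≅ Hom((M_σ)_tors, ℚ/ℤ)`. -/
theorem fg_free_weil_duality_int (M : Type*) [AddCommGroup M] [Module.Free ℤ M]
    [Module.Finite ℤ M] (σ : M ≃+ M) :
    (∃ e : ((M ⧸ coinvRange σ) →+ ℤ) ≃+ fixedSub (dualAct ℤ σ),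
      ∀ (g : (M ⧸ coinvRange σ) →+ ℤ) (m : M),
        ((e g : M →+ ℤ)) m = g (QuotientAddGroup.mk m)) ∧
    (∀ f ∈ coinvRange (dualAct ℤ σ), restrictHom σ f = 0) ∧
    Function.Surjective (restrictHom σ) ∧
    Finite ((restrictHom σ).ker ⧸
      (coinvRange (dualAct ℤ σ)).addSubgroupOf (restrictHom σ).ker) ∧
    Nonempty (((restrictHom σ).ker ⧸
        (coinvRange (dualAct ℤ σ)).addSubgroupOf (restrictHom σ).ker) ≃+
      ((AddCommGroup.torsion (M ⧸ coinvRange σ)) →+ AddCircle (1 : ℚ))) := by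
  obtain ⟨n, snf⟩ := (AddSubgroup.toIntSubmodule (coinvRange σ)).smithNormalForm
    (Module.Free.chooseBasis ℤ M)
  let ext1 := (restrictHomKerQuotientEquiv σ).trans snf.dualCokerEquiv
  let torsionDual := snf.torsionQuotientEquiv.addMonoidHomCongrLeft.trans (piZModDualAddEquiv _)
  exact ⟨⟨coinvDualEquiv σ, fun _ _ => rfl⟩, coinvRange_dualAct_le_ker_restrictHom σ,
    restrictHom_surjective σ,
    .of_equiv _ ext1.symm.toEquiv, ⟨ext1.trans torsionDual.symm⟩⟩
end
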